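/- Let 𝕋 = ℝ/ℤ be the circle group. The map from ℕ (including 0) to C(𝕋, ℂ) given by k ↦ (x ↦ cos(2πkx)) is injective, its range is exactly the cosine class COS(𝕋), and this range is a discrete subspace of C(𝕋, ℂ) in the compact-open topology. Consequently, COS(𝕋) with the topology of uniform convergence on compacta is homeomorphic to ℕ with the discrete topology. -/

import Mathlib

open Topology Real

/-- The cosine class `COS(G)`: nonzero bounded continuous `φ : G → ℂ` satisfying the
d'Alembert equation `φ(x) φ(y) = (φ(x+y) + φ(x-y))/2`. -/
def CosClass (G : Type*) [AddCommGroup G] [TopologicalSpace G] : Set (G → ℂ) :=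
  {φ | Continuous φ ∧ (∃ C, ∀ x, ‖φ x‖ ≤ C) ∧ φ ≠ 0 ∧
    ∀ x y, φ x * φ y = (φ (x + y) + φ (x - y)) / 2}

/-- The function on `𝕋 = ℝ/ℤ` induced by `x ↦ cos(2πkx)`, as an element of `C(𝕋, ℂ)`. -/
noncomputable def cosCharT (k : ℕ) : C(AddCircle (1 : ℝ), ℂ) :=
  ⟨fun x => (((AddCircle.toCircle ((k : ℤ) • x)) : ℂ) +
      (starRingEnd ℂ) ((AddCircle.toCircle ((k : ℤ) • x)) : ℂ)) / 2, by
    have h1 : Continuous fun x : AddCircle (1 : ℝ) =>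
        (AddCircle.toCircle ((k : ℤ) • x) : ℂ) :=
      continuous_subtype_val.comp (AddCircle.continuous_toCircle.comp (continuous_zsmul _))
    exact (h1.add (Complex.continuous_conj.comp h1)).div_const 2⟩

/-!
Integrating the d'Alembert equation `φ x * φ y = (φ (x + y) + φ (x - y)) / 2` in `y` against
`fourier (-n)`, and using the translation and reflection invariance of Haar measure (`φ` is even by
the equation), gives `φ̂ n * φ x = φ̂ n * (e n x + e (-n) x) / 2`, where `φ̂ = fourierCoeff φ` and
`e = fourier`. A nonzero continuous function has a nonzero Fourier coefficient, so `φ` is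
`x ↦ cos (2π |n| x)`. The coefficients also keep the cosines apart: `‖f̂ k - ĝ k‖ ≤ dist f g`, so
distinct cosines are at sup-distance at least `1 / 2` and their set is discrete.
-/

open AddCircle MeasureTheory

section DAlembert

variable {G : Type*} [AddCommGroup G] {φ : G → ℂ}

lemma dalembert_map_zero (hφ : ∀ x y, φ x * φ y = (φ (x + y) + φ (x - y)) / 2) (hne : φ ≠ 0) :
    φ 0 = 1 := by
  have h00 := hφ 0 0
  rw [add_zero, sub_zero] at h00
  have : φ 0 * (φ 0 - 1) = 0 := by linear_combination h00
  refine sub_eq_zero.mp <| (mul_eq_zero.mp this).resolve_left fun h0 => hne <| funext fun x => ?_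
  have hx0 := hφ x 0
  rw [add_zero, sub_zero, h0] at hx0
  show φ x = 0
  linear_combination -hx0

lemma dalembert_map_neg (hφ : ∀ x y, φ x * φ y = (φ (x + y) + φ (x - y)) / 2) (hne : φ ≠ 0)
    (y : G) : φ (-y) = φ y := by
  have h0y := hφ 0 y
  rw [zero_add, zero_sub, dalembert_map_zero hφ hne] at h0y
  linear_combination -2 * h0y

end DAlembert

section FourierCoeff

variable {T : ℝ}

lemma fourier_apply_add (n : ℤ) (x y : AddCircle T) :
    fourier n (x + y) = fourier n x * fourier n y := by
  simp only [fourier_apply, smul_add, toCircle_add, Circle.coe_mul]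

lemma fourier_apply_neg (n : ℤ) (x : AddCircle T) : fourier n (-x) = fourier (-n) x := by
  simp only [fourier_apply, smul_neg, neg_smul]

lemma fourier_apply_sub (n : ℤ) (x y : AddCircle T) :
    fourier n (x - y) = fourier n x * fourier (-n) y := by
  rw [sub_eq_add_neg, fourier_apply_add, fourier_apply_neg]

variable [Fact (0 < T)] {E : Type*} [NormedAddCommGroup E]

lemma Continuous.integrable_haarAddCircle {f : AddCircle T → E} (hf : Continuous f) :
    Integrable f haarAddCircle :=
  hf.integrable_of_hasCompactSupport (.of_compactSpace _)

variable [NormedSpace ℂ E]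

lemma fourierCoeff_sub {f g : AddCircle T → E} (hf : Integrable f haarAddCircle)
    (hg : Integrable g haarAddCircle) :
    fourierCoeff (f - g) = fourierCoeff f - fourierCoeff g := by
  ext n
  simpa [fourierCoeff, smul_sub, -fourier_apply] using
    integral_sub (hf.fourier_smul (-n)) (hg.fourier_smul (-n))

lemma fourierCoeff_comp_add_left (f : AddCircle T → E) (x : AddCircle T) (n : ℤ) :
    fourierCoeff (fun y => f (x + y)) n = fourier n x • fourierCoeff f n := by
  rw [fourierCoeff, fourierCoeff, ← integral_smul,
    ← integral_add_left_eq_self (fun y => fourier n x • fourier (-n) y • f y) x]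
  congr 1 with y
  rw [smul_smul, fourier_apply_add, ← mul_assoc, ← fourier_add, add_neg_cancel, fourier_zero,
    one_mul]

lemma fourierCoeff_comp_neg (f : AddCircle T → E) (n : ℤ) :
    fourierCoeff (fun y => f (-y)) n = fourierCoeff f (-n) := by
  rw [fourierCoeff, fourierCoeff, ← integral_neg_eq_self]
  simp only [neg_neg, fourier_apply_neg]

lemma norm_fourierCoeff_le (f : C(AddCircle T, E)) (n : ℤ) : ‖fourierCoeff f n‖ ≤ ‖f‖ := by
  refine (norm_integral_le_of_norm_le_const (C := ‖f‖) (.of_forall fun y => ?_)).trans_eq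
    (by simp)
  rw [norm_smul, fourier_apply, Circle.norm_coe, one_mul]
  exact f.norm_coe_le_norm y

lemma norm_fourierCoeff_sub_le_dist (f g : C(AddCircle T, E)) (n : ℤ) :
    ‖fourierCoeff f n - fourierCoeff g n‖ ≤ dist f g := by
  rw [dist_eq_norm, ← Pi.sub_apply, ← fourierCoeff_sub f.continuous.integrable_haarAddCircle
    g.continuous.integrable_haarAddCircle, ← ContinuousMap.coe_sub]
  exact norm_fourierCoeff_le _ n

lemma ContinuousMap.eq_zero_of_fourierCoeff_eq_zero (f : C(AddCircle T, ℂ))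
    (h : ∀ n, fourierCoeff f n = 0) : f = 0 := by
  have hLp : ContinuousMap.toLp (E := ℂ) 2 haarAddCircle ℂ f = 0 :=
    fourierBasis.repr.injective <| by
      ext n; rw [fourierBasis_repr, fourierCoeff_toLp, h n, map_zero]; rfl
  exact ContinuousMap.toLp_injective haarAddCircle (p := 2) (𝕜 := ℂ) (by rw [hLp, map_zero])

end FourierCoeff

section CosClass

variable {T : ℝ} [Fact (0 < T)]

lemma fourierCoeff_mul_eq_of_dalembert {φ : AddCircle T → ℂ} (hc : Continuous φ)
    (hφ : ∀ x y, φ x * φ y = (φ (x + y) + φ (x - y)) / 2) (hne : φ ≠ 0) (n : ℤ)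
    (x : AddCircle T) :
    fourierCoeff φ n * φ x = fourierCoeff φ n * ((fourier n x + fourier (-n) x) / 2) := by
  have hsplit : (fun y => φ x * φ y) = (2⁻¹ : ℂ) • ((fun y => φ (x + y)) + fun y => φ (x - y)) :=
    funext fun y => by simp only [hφ x y, Pi.smul_apply, Pi.add_apply, smul_eq_mul]; ring
  have heven : fourierCoeff φ (-n) = fourierCoeff φ n := by
    rw [← fourierCoeff_comp_neg, funext (dalembert_map_neg hφ hne)]
  have hsub : fourierCoeff (fun y => φ (x - y)) n = fourier (-n) x * fourierCoeff φ n := by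
    simp_rw [sub_eq_add_neg]
    rw [fourierCoeff_comp_neg (fun y => φ (x + y)), fourierCoeff_comp_add_left, heven, smul_eq_mul]
  calc fourierCoeff φ n * φ x = fourierCoeff (fun y => φ x * φ y) n := by
        rw [fourierCoeff.const_mul, mul_comm]
    _ = 2⁻¹ * (fourierCoeff (fun y => φ (x + y)) n + fourierCoeff (fun y => φ (x - y)) n) := by
        rw [hsplit, fourierCoeff.const_smul, fourierCoeff.add, smul_eq_mul, Pi.add_apply]
        · exact (hc.comp (continuous_const_add x)).integrable_haarAddCircle
        · exact (hc.comp (continuous_sub_left x)).integrable_haarAddCircle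
    _ = fourierCoeff φ n * ((fourier n x + fourier (-n) x) / 2) := by
        rw [fourierCoeff_comp_add_left, hsub, smul_eq_mul]; ring

lemma mem_cosClass_addCircle_iff {φ : AddCircle T → ℂ} :
    φ ∈ CosClass (AddCircle T) ↔ ∃ k : ℕ, φ = fun x => (fourier k x + fourier (-k) x) / 2 := by
  constructor
  · rintro ⟨hc, -, hne, hφ⟩
    obtain ⟨n, hn⟩ : ∃ n, fourierCoeff φ n ≠ 0 := by
      by_contra! h
      exact hne congr($(ContinuousMap.eq_zero_of_fourierCoeff_eq_zero ⟨φ, hc⟩ h))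
    have hφn := funext fun x => mul_left_cancel₀ hn (fourierCoeff_mul_eq_of_dalembert hc hφ hne n x)
    obtain ⟨k, rfl | rfl⟩ := Int.eq_nat_or_neg n
    · exact ⟨k, hφn⟩
    · exact ⟨k, hφn.trans (funext fun x => by rw [neg_neg, add_comm])⟩
  · rintro ⟨k, rfl⟩
    refine ⟨by fun_prop, ⟨1, fun x => ?_⟩, fun h => ?_, fun x y => ?_⟩
    · rw [norm_div, Complex.norm_two, div_le_one two_pos]
      refine (norm_add_le _ _).trans ?_
      simp only [fourier_apply, Circle.norm_coe]
      norm_num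
    · simpa [fourier_eval_zero] using congr_fun h 0
    · simp only [fourier_apply_add, fourier_apply_sub, neg_neg]
      ring

end CosClass

lemma cosCharT_apply (k : ℕ) (x : AddCircle (1 : ℝ)) :
    cosCharT k x = (fourier k x + fourier (-k) x) / 2 := by
  rw [fourier_neg, fourier_apply]
  rfl

lemma cosCharT_coe_apply (k : ℕ) (x : ℝ) :
    cosCharT k ((x : ℝ) : AddCircle (1 : ℝ)) = (Real.cos (2 * π * k * x) : ℂ) := by
  rw [cosCharT_apply, fourier_coe_apply, fourier_coe_apply, Complex.ofReal_cos, Complex.cos]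
  push_cast
  ring_nf

lemma range_cosCharT :
    Set.range cosCharT = {φ : C(AddCircle (1 : ℝ), ℂ) | ⇑φ ∈ CosClass (AddCircle (1 : ℝ))} := by
  ext φ
  simp only [Set.mem_range, Set.mem_ofPred_eq, mem_cosClass_addCircle_iff, ContinuousMap.ext_iff,
    funext_iff, cosCharT_apply, eq_comm]

lemma fourierCoeff_cosCharT (k : ℕ) :
    fourierCoeff (cosCharT k) = (2⁻¹ : ℂ) • (Pi.single (k : ℤ) 1 + Pi.single (-k : ℤ) 1) := by
  have : ⇑(cosCharT k) = (2⁻¹ : ℂ) • (⇑(fourier k) + ⇑(fourier (-k))) :=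
    funext fun x => by simp only [cosCharT_apply, Pi.smul_apply, Pi.add_apply, smul_eq_mul]; ring
  rw [this, funext (fourierCoeff.const_smul _ _), fourierCoeff.add, fourierCoeff_fourier,
    fourierCoeff_fourier]
  · rfl
  · exact (fourier _).continuous.integrable_haarAddCircle
  · exact (fourier _).continuous.integrable_haarAddCircle

lemma le_dist_cosCharT {k j : ℕ} (hkj : k ≠ j) : 1 / 2 ≤ dist (cosCharT k) (cosCharT j) := by
  have hdiff : fourierCoeff (cosCharT j) j - fourierCoeff (cosCharT k) j
      = 2⁻¹ * (1 + if j = 0 then 1 else 0) := by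
    have h1 : (j : ℤ) ≠ k := by omega
    have h2 : (j : ℤ) ≠ -k := by omega
    simp [fourierCoeff_cosCharT, Pi.single_apply, h1, h2]
  rw [dist_comm]
  refine le_trans ?_ (norm_fourierCoeff_sub_le_dist _ _ j)
  rw [hdiff]
  split_ifs <;> norm_num

lemma cosCharT_injective : Function.Injective cosCharT := fun k j h => by
  by_contra hkj
  have := le_dist_cosCharT hkj
  rw [h, dist_self] at this
  norm_num at this

lemma discreteTopology_range_cosCharT : DiscreteTopology (Set.range cosCharT) :=
  .of_forall_le_dist (r := 1 / 2) (by norm_num) fun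
    | ⟨_, k, rfl⟩, ⟨_, j, rfl⟩, hne => le_dist_cosCharT fun h => hne (by rw [h])

/-- On `𝕋 = ℝ/ℤ`, the map `k ↦ (x ↦ cos(2πkx))` from `ℕ` to `C(𝕋, ℂ)`
is injective, its range is exactly `COS(𝕋)`, and the range is a discrete subspace in the
compact-open topology; consequently `COS(𝕋)` with the topology of uniform convergence on
compacta is homeomorphic to the discrete space `ℕ`. -/
theorem cosClass_circle_homeomorph :
    (∀ (k : ℕ) (x : ℝ),
      cosCharT k ((x : ℝ) : AddCircle (1 : ℝ)) = (Real.cos (2 * π * k * x) : ℂ)) ∧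
    Function.Injective cosCharT ∧
    Set.range cosCharT = {φ : C(AddCircle (1 : ℝ), ℂ) | ⇑φ ∈ CosClass (AddCircle (1 : ℝ))} ∧
    DiscreteTopology (Set.range cosCharT) ∧
    Nonempty ({φ : C(AddCircle (1 : ℝ), ℂ) // ⇑φ ∈ CosClass (AddCircle (1 : ℝ))} ≃ₜ ℕ) := by
  have : DiscreteTopology {φ : C(AddCircle (1 : ℝ), ℂ) | ⇑φ ∈ CosClass (AddCircle (1 : ℝ))} :=
    range_cosCharT ▸ discreteTopology_range_cosCharT
  refine ⟨cosCharT_coe_apply, cosCharT_injective, range_cosCharT, discreteTopology_range_cosCharT,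
    ⟨?_⟩⟩
  exact ((Equiv.ofInjective _ cosCharT_injective).trans
    (Equiv.setCongr range_cosCharT)).symm.toHomeomorphOfDiscrete
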